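/- For every integer m ≥ 2, the orbit of the initial value 2^m + 3 under Q goes to infinity: Q^n(2^m + 3) → ∞ as n → ∞. -/

import Mathlib

/-!
On an odd `n` with `n - 1 = 2^j t`, `t` odd, the map `Q` first produces `2^(j-1) t n` and then
halves it back to `t n`, never dropping below `n` on the way. This stalls only when `t = 1`, i.e.
`n = 2^j + 1`, so "odd and dividing no `2^k + 1`" is an invariant of these odd-to-odd steps,
along which the orbit is multiplied by at least `3` each time.

A divisor `d ≡ 3 (mod 4)` of `2^k + 1` forces `k` odd, as `-1` is not a square mod `d`; a divisor
`q > 2` of some `2^c + 1` with `c` even forces `k` even, since `(-1)^k = 2^(ck) = (-1)^c` mod `q`.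
A multiple of both divides no `2^k + 1`. For `2^m + 3 ≡ 3 (mod 4)` one or two odd steps supply
such a `q`: `2^(m-1) + 1` when `m` is odd, and `5` when `m` is even.
-/

/-- The divide-or-choose-2 map: `Q n = n/2` if `n` is even, `Q n = n*(n-1)/2` if `n` is odd. -/
def Q (n : ℕ) : ℕ := if n % 2 = 0 then n / 2 else n * (n - 1) / 2

open Filter

lemma tendsto_iterate_atTop_of_exists_iterate_mem {f : ℕ → ℕ} {S : Set ℕ}
    (hS : ∀ x ∈ S, ∃ j, f^[j] x ∈ S ∧ x < f^[j] x ∧ ∀ i ≤ j, x ≤ f^[i] x) {x : ℕ}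
    (hx : x ∈ S) : Tendsto (f^[·] x) atTop atTop := by
  have iterate_ge : ∀ n, ∀ x ∈ S, x ≤ f^[n] x := by
    intro n
    induction n using Nat.strong_induction_on with
    | _ n ih =>
      intro x hx
      obtain ⟨j, hjS, hlt, hle⟩ := hS x hx
      rcases le_or_gt n j with hnj | hjn
      · exact hle n hnj
      · have hj : j ≠ 0 := by rintro rfl; exact hlt.false
        have := ih (n - j) (by omega) _ hjS
        rw [← Function.iterate_add_apply, Nat.sub_add_cancel hjn.le] at this
        omega
  have eventually_ge : ∀ b, ∀ x ∈ S, ∀ᶠ n in atTop, x + b ≤ f^[n] x := by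
    intro b
    induction b with
    | zero => exact fun x hx => Eventually.of_forall fun n => iterate_ge n x hx
    | succ b ih =>
      intro x hx
      obtain ⟨j, hjS, hlt, -⟩ := hS x hx
      filter_upwards [(tendsto_sub_atTop_nat j).eventually (ih _ hjS), eventually_ge_atTop j]
        with n hn hjn
      rw [← Function.iterate_add_apply, Nat.sub_add_cancel hjn] at hn
      omega
  exact tendsto_atTop.2 fun b => (eventually_ge b x hx).mono fun n hn => by omega

lemma even_iff_even_of_pow_eq_neg_one {R : Type*} [Ring R] (h : (-1 : R) ≠ 1) {a : R} {c k : ℕ}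
    (hc : a ^ c = -1) (hk : a ^ k = -1) : Even c ↔ Even k := by
  have : (-1 : R) ^ k = (-1) ^ c :=
    calc (-1 : R) ^ k = (a ^ c) ^ k := by rw [hc]
      _ = (a ^ k) ^ c := by rw [← pow_mul, ← pow_mul, mul_comm]
      _ = (-1) ^ c := by rw [hk]
  rw [← neg_one_pow_eq_one_iff_even h, ← neg_one_pow_eq_one_iff_even h, this]

lemma ZMod.not_isSquare_neg_one_of_mod_four_eq_three {n : ℕ} (hn : n % 4 = 3) :
    ¬IsSquare (-1 : ZMod n) := by
  have hodd : Odd n := Nat.odd_iff.2 (by omega)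
  exact_mod_cast ZMod.nonsquare_of_jacobiSym_eq_neg_one (a := -1)
    (by rw [jacobiSym.at_neg_one hodd, ZMod.χ₄_nat_three_mod_four hn])

lemma ZMod.two_pow_eq_neg_one_of_dvd {q k : ℕ} (h : q ∣ 2 ^ k + 1) : (2 : ZMod q) ^ k = -1 := by
  rw [eq_neg_iff_add_eq_zero]
  exact_mod_cast (ZMod.natCast_eq_zero_iff _ _).2 h

lemma odd_of_dvd_two_pow_add_one {d k : ℕ} (hd : d % 4 = 3) (h : d ∣ 2 ^ k + 1) : Odd k := by
  by_contra hk
  exact ZMod.not_isSquare_neg_one_of_mod_four_eq_three hd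
    (ZMod.two_pow_eq_neg_one_of_dvd h ▸ (Nat.not_odd_iff_even.1 hk).isSquare_pow 2)

lemma even_iff_even_of_dvd_two_pow_add_one {q c k : ℕ} (hq : 2 < q) (hc : q ∣ 2 ^ c + 1)
    (hk : q ∣ 2 ^ k + 1) : Even c ↔ Even k :=
  have : Fact (2 < q) := ⟨hq⟩
  even_iff_even_of_pow_eq_neg_one ZMod.neg_one_ne_one (ZMod.two_pow_eq_neg_one_of_dvd hc)
    (ZMod.two_pow_eq_neg_one_of_dvd hk)

lemma Q_two_mul (n : ℕ) : Q (2 * n) = n := by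
  simp [Q]

lemma Q_two_mul_add_one (t : ℕ) : Q (2 * t + 1) = (2 * t + 1) * t := by
  rw [Q, if_neg (by omega), Nat.add_sub_cancel, mul_left_comm, Nat.mul_div_cancel_left _ two_pos]

lemma Q_iterate_two_pow_mul {i k : ℕ} (h : i ≤ k) (n : ℕ) :
    Q^[i] (2 ^ k * n) = 2 ^ (k - i) * n := by
  induction i generalizing k with
  | zero => rfl
  | succ i ih =>
    obtain ⟨k, rfl⟩ := Nat.exists_eq_add_of_le' (Nat.zero_lt_of_lt h)
    rw [Function.iterate_succ_apply, pow_succ', mul_assoc, Q_two_mul, ih (by omega)]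
    congr 2
    omega

lemma Q_iterate_two_pow_mul_add_one {i v : ℕ} (hi : i ≤ v) (t : ℕ) :
    Q^[i + 1] (2 ^ (v + 1) * t + 1) = 2 ^ (v - i) * (t * (2 ^ (v + 1) * t + 1)) := by
  have h : 2 ^ (v + 1) * t + 1 = 2 * (2 ^ v * t) + 1 := by ring
  rw [Function.iterate_succ_apply, h, Q_two_mul_add_one, mul_comm, ← mul_assoc,
    mul_comm _ (2 ^ v), mul_assoc, Q_iterate_two_pow_mul hi]

lemma exists_Q_iterate_eq_mul {n : ℕ} (hn : Odd n) (h1 : n ≠ 1) :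
    ∃ j t, Odd t ∧ n - 1 = 2 ^ j * t ∧ Q^[j] n = t * n ∧ ∀ i ≤ j, n ≤ Q^[i] n := by
  obtain ⟨j, t, ht, hjt⟩ := Nat.exists_eq_two_pow_mul_odd (n := n - 1) (by grind)
  obtain ⟨v, rfl⟩ : ∃ v, j = v + 1 := Nat.exists_eq_succ_of_ne_zero fun hj => by
    subst hj; grind
  have hn' : n = 2 ^ (v + 1) * t + 1 := by have := hn.pos; omega
  refine ⟨v + 1, t, ht, hjt, by rw [hn', Q_iterate_two_pow_mul_add_one le_rfl]; simp, ?_⟩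
  rintro (_ | i) hi
  · exact le_rfl
  · rw [hn', Q_iterate_two_pow_mul_add_one (by omega), ← hn']
    exact le_mul_of_one_le_of_le Nat.one_le_two_pow (Nat.le_mul_of_pos_left n ht.pos)

lemma tendsto_Q_iterate {n : ℕ} (hn : Odd n) (h : ∀ k, ¬n ∣ 2 ^ k + 1) :
    Tendsto (Q^[·] n) atTop atTop := by
  refine tendsto_iterate_atTop_of_exists_iterate_mem (S := {n | Odd n ∧ ∀ k, ¬n ∣ 2 ^ k + 1})
    (fun x ⟨hx, hxk⟩ => ?_) ⟨hn, h⟩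
  have h1 : x ≠ 1 := by rintro rfl; exact hxk 0 (one_dvd _)
  obtain ⟨j, t, ht, hjt, hQ, hle⟩ := exists_Q_iterate_eq_mul hx h1
  have ht1 : t ≠ 1 := by
    rintro rfl
    exact hxk j ⟨1, by have := hx.pos; omega⟩
  refine ⟨j, ?_, ?_, hle⟩ <;> rw [hQ]
  · exact ⟨ht.mul hx, fun k hk => hxk k (dvd_of_mul_left_dvd hk)⟩
  · exact (Nat.lt_mul_iff_one_lt_left hx.pos).2 (by have := ht.pos; omega)

lemma tendsto_Q_iterate_of_dvd_of_dvd_sub_one {n d q c : ℕ} (hn : Odd n) (hd : d % 4 = 3)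
    (hdn : d ∣ n) (hq : Odd q) (hq1 : q ≠ 1) (hqc : q ∣ 2 ^ c + 1) (hc : Even c)
    (hqn : q ∣ n - 1) : Tendsto (Q^[·] n) atTop atTop := by
  have h1 : n ≠ 1 := by rintro rfl; rw [Nat.dvd_one] at hdn; omega
  obtain ⟨j, t, ht, hjt, hQ, -⟩ := exists_Q_iterate_eq_mul hn h1
  have hqt : q ∣ t :=
    (hq.coprime_two_right.pow_right j).dvd_of_dvd_mul_left (hjt ▸ hqn)
  have hblocked : ∀ k, ¬t * n ∣ 2 ^ k + 1 := fun k hk =>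
    Nat.not_even_iff_odd.2 (odd_of_dvd_two_pow_add_one hd (hdn.mul_left t |>.trans hk))
      ((even_iff_even_of_dvd_two_pow_add_one (by obtain ⟨r, rfl⟩ := hq; omega) hqc
        (hqt.mul_right n |>.trans hk)).1 hc)
  rw [← tendsto_add_atTop_iff_nat j]
  simpa only [Function.iterate_add_apply, hQ] using tendsto_Q_iterate (ht.mul hn) hblocked

lemma five_dvd_mul_sub_one_of_odd {c : ℕ} (hc : Odd c) :
    5 ∣ (2 * (2 ^ c + 1) + 1) * (2 ^ c + 1) - 1 := by
  have h5 : 5 ∣ (2 ^ c) ^ 2 + 1 := by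
    rw [← pow_mul, mul_comm, pow_mul]
    simpa using hc.nat_add_dvd_pow_add_pow 4 1
  have : (2 * (2 ^ c + 1) + 1) * (2 ^ c + 1) - 1 = 2 * ((2 ^ c) ^ 2 + 1) + 5 * 2 ^ c := by
    apply Nat.sub_eq_of_eq_add; ring
  rw [this]
  exact dvd_add (dvd_mul_of_dvd_right h5 2) (dvd_mul_right 5 _)

/-- For every integer `m ≥ 2`, the orbit of `2^m + 3` under `Q` goes to infinity. -/
theorem stmt_17 (m : ℕ) (hm : 2 ≤ m) :
    Filter.Tendsto (fun n : ℕ => Q^[n] (2 ^ m + 3)) Filter.atTop Filter.atTop := by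
  have hx : 2 ^ m + 3 = 2 * (2 ^ (m - 1) + 1) + 1 := by
    rw [mul_add, ← pow_succ', Nat.sub_add_cancel (by omega : 1 ≤ m)]
  obtain ⟨r, hr⟩ : Even (2 ^ (m - 1)) := Nat.even_pow.2 ⟨even_two, by omega⟩
  have hx4 : (2 * (2 ^ (m - 1) + 1) + 1) % 4 = 3 := by omega
  rw [hx]
  rcases Nat.even_or_odd (m - 1) with hc | hc
  · exact tendsto_Q_iterate_of_dvd_of_dvd_sub_one (odd_two_mul_add_one _) hx4 dvd_rfl
      ⟨r, by omega⟩ (by simp) dvd_rfl hc (Dvd.intro_left 2 rfl)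
  · rw [← tendsto_add_atTop_iff_nat 1]
    simpa only [Function.iterate_succ_apply, Q_two_mul_add_one] using
      tendsto_Q_iterate_of_dvd_of_dvd_sub_one ((odd_two_mul_add_one _).mul ⟨r, by omega⟩) hx4
        (dvd_mul_right _ _) (by decide) (by decide) (by norm_num : 5 ∣ 2 ^ 2 + 1) even_two
        (five_dvd_mul_sub_one_of_odd hc)
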